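/- Let K be a number field of degree 3 over ℚ and let ν ∈ 𝒪_K satisfy ν³ = ν² + 3ν − 1 (i.e., ν is a root of X³ − X² − 3X + 1). Let 𝔓 = (2, ν + 1) be the ideal of 𝒪_K generated by 2 and ν + 1. Then 𝔓³ equals the principal ideal (2) (so 2 is totally ramified in K), and the quotient ring 𝒪_K/𝔓 has exactly 2 elements (so 𝒪_K/𝔓 ≅ 𝔽₂). -/
import Mathlib

open NumberField Polynomial IntermediateField

/-- Let `K` be a cubic number field and `ν ∈ 𝒪_K` a root of
`X³ − X² − 3X + 1` (i.e. `ν³ = ν² + 3ν − 1`). Then the ideal `𝔓 = (2, ν + 1)` satisfies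
`𝔓³ = (2)` (so `2` is totally ramified in `K`) and `𝒪_K/𝔓` has exactly 2 elements. -/
theorem stmt_10 (K : Type*) [Field K] [NumberField K] (hK : Module.finrank ℚ K = 3)
    (ν : 𝓞 K) (hν : ν ^ 3 = ν ^ 2 + 3 * ν - 1) :
    (Ideal.span {2, ν + 1} : Ideal (𝓞 K)) ^ 3 = Ideal.span {2} ∧
      Nat.card ((𝓞 K) ⧸ (Ideal.span {2, ν + 1} : Ideal (𝓞 K))) = 2 := by
  set μ : 𝓞 K := ν + 1 with hμdef
  have hμ3 : μ ^ 3 = 4 * μ ^ 2 - 2 * μ - 2 := by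
    simp only [hμdef]; linear_combination hν
  have h2 : (2 : 𝓞 K) = μ * (4 * μ - μ ^ 2 - 2) := by linear_combination hμ3
  have h2' : (2 : 𝓞 K) = μ ^ 3 * (13 * μ - 3 * μ ^ 2 - 11) := by
    linear_combination (3 * μ ^ 2 - μ + 1) * hμ3
  have hP : (Ideal.span {2, ν + 1} : Ideal (𝓞 K)) = Ideal.span {μ} := by
    apply le_antisymm
    · rw [Ideal.span_le]
      rintro y hy
      simp only [Set.mem_insert_iff, Set.mem_singleton_iff] at hy
      rcases hy with rfl | rfl
      · exact Ideal.mem_span_singleton.mpr ⟨4 * μ - μ ^ 2 - 2, h2⟩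
      · exact Ideal.subset_span rfl
    · rw [Ideal.span_le]
      rintro y hy
      simp only [Set.mem_singleton_iff] at hy
      subst hy
      exact Ideal.subset_span (by simp [hμdef])
  rw [hP]
  constructor
  · rw [Ideal.span_singleton_pow]
    apply le_antisymm
    · rw [Ideal.span_le]
      rintro y hy
      simp only [Set.mem_singleton_iff] at hy
      subst hy
      exact Ideal.mem_span_singleton.mpr ⟨2 * μ ^ 2 - μ - 1, by linear_combination hμ3⟩
    · rw [Ideal.span_le]
      rintro y hy
      simp only [Set.mem_singleton_iff] at hy
      subst hy
      exact Ideal.mem_span_singleton.mpr ⟨13 * μ - 3 * μ ^ 2 - 11, h2'⟩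
  · -- cardinality
    rw [← Submodule.cardQuot_apply, ← Ideal.absNorm_apply, Ideal.absNorm_span_singleton]
    -- compute the norm
    set x : K := algebraMap (𝓞 K) K μ with hxdef
    have hxint : IsIntegral ℚ x := IsIntegral.of_finite ℚ x
    set g : ℚ[X] := X ^ 3 + C (-4) * X ^ 2 + C 2 * X + C 2 with hgdef
    have hgmonic : g.Monic := by
      unfold g; monicity!
    have hgdeg : g.natDegree = 3 := by
      unfold g; compute_degree!
    have hxK : x ^ 3 = 4 * x ^ 2 - 2 * x - 2 := by
      have h := congrArg (algebraMap (𝓞 K) K) hμ3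
      simp only [map_pow, map_sub, map_mul, map_ofNat] at h
      exact h
    have hx0 : Polynomial.aeval x g = 0 := by
      simp only [hgdef, map_add, map_mul, map_pow, aeval_X, aeval_C, map_neg, map_ofNat]
      linear_combination hxK
    have hdvd : minpoly ℚ x ∣ g := minpoly.dvd ℚ x hx0
    have hdeg_dvd : (minpoly ℚ x).natDegree ∣ 3 := hK ▸ minpoly.degree_dvd hxint
    have hne1 : (minpoly ℚ x).natDegree ≠ 1 := by
      intro h1
      obtain ⟨q, hq⟩ := (minpoly.natDegree_eq_one_iff).mp h1
      have hqint : IsIntegral ℤ q := by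
        rw [← isIntegral_algebraMap_iff (algebraMap ℚ K).injective]
        rw [hq]
        exact RingOfIntegers.isIntegral_coe μ
      obtain ⟨n, hn⟩ := IsIntegrallyClosed.isIntegral_iff.mp hqint
      have hq3 : q ^ 3 = 4 * q ^ 2 - 2 * q - 2 := by
        have h0 : (algebraMap ℚ K) (q ^ 3 - (4 * q ^ 2 - 2 * q - 2)) = 0 := by
          simp only [map_sub, map_mul, map_pow, map_ofNat, hq]
          linear_combination hxK
        have h1 := (map_eq_zero_iff _ (algebraMap ℚ K).injective).mp h0
        linear_combination h1
      have hn3 : n ^ 3 = 4 * n ^ 2 - 2 * n - 2 := by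
        rw [← hn] at hq3
        simp only [eq_intCast] at hq3
        exact_mod_cast hq3
      have : ((n : ZMod 4) ^ 3 = 4 * (n : ZMod 4) ^ 2 - 2 * (n : ZMod 4) - 2) := by
        exact_mod_cast congrArg (Int.cast : ℤ → ZMod 4) hn3
      revert this
      generalize (n : ZMod 4) = m
      revert m
      decide
    have hdeg3 : (minpoly ℚ x).natDegree = 3 := by
      rcases (Nat.prime_three.eq_one_or_self_of_dvd _ hdeg_dvd) with h | h
      · exact absurd h hne1
      · exact h
    have hming : minpoly ℚ x = g :=
      Polynomial.eq_of_dvd_of_natDegree_le_of_leadingCoeff hdvd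
        (by rw [hgdeg, hdeg3]) (by rw [(minpoly.monic hxint).leadingCoeff, hgmonic.leadingCoeff])
    -- norm via adjoin
    have hfin1 : Module.finrank ℚ⟮x⟯ K = 1 := by
      have hmul := Module.finrank_mul_finrank ℚ ℚ⟮x⟯ K
      rw [IntermediateField.adjoin.finrank hxint, hdeg3, hK] at hmul
      omega
    have hnormx : Algebra.norm ℚ x = -2 := by
      rw [Algebra.norm_eq_norm_adjoin ℚ x, hfin1, pow_one,
        ← IntermediateField.adjoin.powerBasis_gen hxint,
        Algebra.PowerBasis.norm_gen_eq_coeff_zero_minpoly,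
        IntermediateField.adjoin.powerBasis_gen, IntermediateField.minpoly_gen,
        IntermediateField.adjoin.powerBasis_dim, hming, hgdeg]
      simp [hgdef]
      ring
    have hnormμ : Algebra.norm ℤ μ = -2 := by
      have : ((Algebra.norm ℤ μ : ℤ) : ℚ) = -2 := by
        rw [Algebra.coe_norm_int]; exact hnormx
      exact_mod_cast this
    rw [hnormμ]
    rfl
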